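/- arXiv:2508.01775 — 6 statements merged into one kernel-verified Lean document; each statement's English description precedes it below -/
import Mathlib

section
/- Let x : [t₀,∞) → ℝ^n be differentiable at t with ẋ(t) = −proj_{C_α(x(t),t)}(0), where C_α(x(t),t) = conv{∇f_i(x(t))/α_i(x(t),t) : i=1,…,m} and each α_i(x(t),t) ≥ α(x(t),t) > 0. Then for each i, α(x(t),t)·‖ẋ(t)‖² + (d/dt) f_i(x(t)) ≤ 0. -/
/-!
The velocity is `-p`, where `p` is the minimum-norm point of `C = conv {gᵢ / αᵢ}`. The projection
theorem gives `‖p‖² ≤ ⟪c, p⟫` for every `c ∈ C`; at `c = gᵢ / αᵢ` this reads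
`αᵢ ‖p‖² ≤ ⟪gᵢ, p⟫ = -(d/dt) fᵢ(x(t))` by the chain rule, and `a ≤ αᵢ` finishes.
-/

open scoped RealInnerProductSpace

section

variable {F : Type*} [NormedAddCommGroup F] [InnerProductSpace ℝ F]

theorem HasGradientAt.comp_hasDerivAt_inner [CompleteSpace F] {f : F → ℝ} {g : F}
    {x : ℝ → F} {x' : F} {t : ℝ} (hf : HasGradientAt f g (x t)) (hx : HasDerivAt x x' t) :
    HasDerivAt (fun s => f (x s)) ⟪g, x'⟫ t := by
  have h := hf.hasFDerivAt.comp_hasDerivAt t hx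
  simp only [InnerProductSpace.toDual_apply_apply] at h
  exact h

theorem Convex.norm_sq_le_inner_of_forall_norm_le {K : Set F} (hK : Convex ℝ K) {p : F}
    (hp : p ∈ K) (hmin : ∀ y ∈ K, ‖p‖ ≤ ‖y‖) {y : F} (hy : y ∈ K) : ‖p‖ ^ 2 ≤ ⟪y, p⟫ := by
  have : Nonempty K := ⟨⟨p, hp⟩⟩
  have hinf : ‖(0 : F) - p‖ = ⨅ w : K, ‖(0 : F) - w‖ :=
    le_antisymm (le_ciInf fun w => by simpa using hmin w w.2)
      (ciInf_le (f := fun w : K => ‖(0 : F) - w‖)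
        ⟨0, by rintro _ ⟨w, rfl⟩; exact norm_nonneg _⟩ ⟨p, hp⟩)
  have h := (norm_eq_iInf_iff_real_inner_le_zero hK hp).mp hinf y hy
  rw [zero_sub, inner_neg_left, inner_sub_right, real_inner_self_eq_norm_sq,
    real_inner_comm] at h
  linarith

theorem Convex.mul_norm_sq_le_inner_of_inv_smul_mem {K : Set F} (hK : Convex ℝ K) {p : F}
    (hp : p ∈ K) (hmin : ∀ y ∈ K, ‖p‖ ≤ ‖y‖) {c : ℝ} (hc : 0 < c) {v : F}
    (hv : c⁻¹ • v ∈ K) : c * ‖p‖ ^ 2 ≤ ⟪v, p⟫ := by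
  have h := hK.norm_sq_le_inner_of_forall_norm_le hp hmin hv
  rw [real_inner_smul_left] at h
  rwa [le_inv_mul_iff₀ hc] at h

end

theorem descent_inequality_MBGF_general {n m : ℕ}
    (f : Fin m → EuclideanSpace ℝ (Fin n) → ℝ)
    (g : Fin m → EuclideanSpace ℝ (Fin n) → EuclideanSpace ℝ (Fin n))
    (x : ℝ → EuclideanSpace ℝ (Fin n)) (t : ℝ)
    (hg : ∀ i, HasGradientAt (f i) (g i (x t)) (x t))
    (x' : EuclideanSpace ℝ (Fin n)) (hx : HasDerivAt x x' t)
    (αi : Fin m → ℝ) (a : ℝ) (ha : 0 < a) (hai : ∀ i, a ≤ αi i)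
    (p : EuclideanSpace ℝ (Fin n))
    (hpmem : p ∈ convexHull ℝ (Set.range fun i => (αi i)⁻¹ • g i (x t)))
    (hpmin : ∀ y ∈ convexHull ℝ (Set.range fun i => (αi i)⁻¹ • g i (x t)), ‖p‖ ≤ ‖y‖)
    (hflow : x' = -p)
    (d : Fin m → ℝ) (hd : ∀ i, HasDerivAt (fun s => f i (x s)) (d i) t) :
    ∀ i, a * ‖x'‖ ^ 2 + d i ≤ 0 := by
  intro i
  have hdi : d i = -⟪g i (x t), p⟫ := by
    rw [(hd i).unique ((hg i).comp_hasDerivAt_inner hx), hflow, inner_neg_right]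
  have hαi : αi i * ‖p‖ ^ 2 ≤ ⟪g i (x t), p⟫ :=
    (convex_convexHull ℝ _).mul_norm_sq_le_inner_of_inv_smul_mem hpmem hpmin
      (ha.trans_le (hai i)) (subset_convexHull ℝ _ ⟨i, rfl⟩)
  have ha_le : a * ‖p‖ ^ 2 ≤ αi i * ‖p‖ ^ 2 := by gcongr; exact hai i
  rw [hflow, norm_neg, hdi]
  linarith

/-- descent inequality along the balanced gradient flow:
`α(x(t),t)·‖ẋ(t)‖² + (d/dt) f_i(x(t)) ≤ 0`. -/
theorem descent_inequality_MBGF {n m : ℕ} [NeZero m]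
    (f : Fin m → EuclideanSpace ℝ (Fin n) → ℝ)
    (g : Fin m → EuclideanSpace ℝ (Fin n) → EuclideanSpace ℝ (Fin n))
    (x : ℝ → EuclideanSpace ℝ (Fin n)) (t : ℝ)
    (hg : ∀ i, HasGradientAt (f i) (g i (x t)) (x t))
    (x' : EuclideanSpace ℝ (Fin n)) (hx : HasDerivAt x x' t)
    (αi : Fin m → ℝ) (a : ℝ) (ha : 0 < a) (hai : ∀ i, a ≤ αi i)
    (p : EuclideanSpace ℝ (Fin n))
    (hpmem : p ∈ convexHull ℝ (Set.range fun i => (αi i)⁻¹ • g i (x t)))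
    (hpmin : ∀ y ∈ convexHull ℝ (Set.range fun i => (αi i)⁻¹ • g i (x t)), ‖p‖ ≤ ‖y‖)
    (hflow : x' = -p)
    (d : Fin m → ℝ) (hd : ∀ i, HasDerivAt (fun s => f i (x s)) (d i) t) :
    ∀ i, a * ‖x'‖ ^ 2 + d i ≤ 0 :=
  descent_inequality_MBGF_general f g x t hg x' hx αi a ha hai p hpmem hpmin hflow d hd
end

section
/- Let x : [t₀,∞) → ℝ^n be an absolutely continuous solution of ẋ(t) = −proj_{C_α(x(t),t)}(0) with C_α as the convex hull of normalized gradients ∇f_i/α(x(t),t), α ≥ α_min > 0. Then each function t ↦ f_i(x(t)) is non-increasing, and consequently for any s ≤ t, the sublevel set L(f, f(x(t))) := {y : f_i(y) ≤ f_i(x(t)) ∀i} is contained in L(f, f(x(s))). -/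
/-! The minimal-norm point `p` of a convex set makes a non-negative inner product with every
point of the set. The velocity is `-p` for the minimal-norm point `p` of the hull of the
positively rescaled gradients, so `⟪∇fᵢ(x t), ẋ t⟫ ≤ 0`; by the chain rule and the mean value
theorem every `fᵢ ∘ x` is non-increasing, which nests the sublevel sets. -/

open Set
open scoped RealInnerProductSpace

section

variable {E : Type*} [NormedAddCommGroup E] [InnerProductSpace ℝ E]

theorem Convex.inner_nonneg_of_forall_norm_le {K : Set E} (hK : Convex ℝ K)
    {p : E} (hp : p ∈ K) (hmin : ∀ y ∈ K, ‖p‖ ≤ ‖y‖) {y : E} (hy : y ∈ K) : 0 ≤ ⟪p, y⟫ := by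
  have : Nonempty K := ⟨⟨p, hp⟩⟩
  have hinf : ‖(0 : E) - p‖ = ⨅ w : K, ‖(0 : E) - w‖ := by
    refine le_antisymm (le_ciInf fun w => by simpa using hmin w w.2) ?_
    exact ciInf_le ⟨0, by rintro _ ⟨w, rfl⟩; exact norm_nonneg _⟩ (⟨p, hp⟩ : K)
  have hvar : ⟪0 - p, y - p⟫ ≤ 0 := (norm_eq_iInf_iff_real_inner_le_zero hK hp).mp hinf y hy
  rw [zero_sub, inner_neg_left, inner_sub_right, real_inner_self_eq_norm_sq] at hvar
  nlinarith [sq_nonneg ‖p‖]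

theorem inner_neg_nonpos_of_forall_norm_le_convexHull {ι : Type*} {v : ι → E} {c : ℝ}
    (hc : 0 < c) {p : E} (hp : p ∈ convexHull ℝ (range fun j => c • v j))
    (hmin : ∀ y ∈ convexHull ℝ (range fun j => c • v j), ‖p‖ ≤ ‖y‖) (i : ι) :
    ⟪v i, -p⟫ ≤ 0 := by
  have h : 0 ≤ c * ⟪p, v i⟫ := by
    rw [← real_inner_smul_right]
    exact (convex_convexHull ℝ _).inner_nonneg_of_forall_norm_le hp hmin
      (subset_convexHull ℝ _ ⟨i, rfl⟩)
  rw [inner_neg_right, real_inner_comm, neg_nonpos]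
  exact nonneg_of_mul_nonneg_right h hc

theorem antitoneOn_comp_of_inner_gradient_nonpos [CompleteSpace E] {f : E → ℝ}
    {g : E → E} (hg : ∀ u, HasGradientAt f (g u) u) {x x' : ℝ → E} {t₀ : ℝ}
    (hx : ∀ t ≥ t₀, HasDerivAt x (x' t) t) (hdesc : ∀ t ≥ t₀, ⟪g (x t), x' t⟫ ≤ 0) :
    AntitoneOn (fun t => f (x t)) (Ici t₀) := by
  have hderiv : ∀ t ≥ t₀, HasDerivAt (fun t => f (x t)) ⟪g (x t), x' t⟫ t :=
    fun t ht => by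
      have h := (hg (x t)).hasFDerivAt.comp_hasDerivAt t (hx t ht)
      simp only [InnerProductSpace.toDual_apply_apply] at h
      exact h
  refine antitoneOn_of_hasDerivWithinAt_nonpos (f' := fun t => ⟪g (x t), x' t⟫)
    (convex_Ici t₀) (fun t ht => (hderiv t ht).continuousAt.continuousWithinAt)
    (fun t ht => ?_) (fun t ht => ?_)
  · rw [interior_Ici] at ht
    exact (hderiv t (le_of_lt ht)).hasDerivWithinAt
  · rw [interior_Ici] at ht
    exact hdesc t (le_of_lt ht)

end

theorem sublevel_monotone_MBGF_general {n m : ℕ}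
    (f : Fin m → EuclideanSpace ℝ (Fin n) → ℝ)
    (g : Fin m → EuclideanSpace ℝ (Fin n) → EuclideanSpace ℝ (Fin n))
    (hg : ∀ i u, HasGradientAt (f i) (g i u) u)
    (t₀ αmin : ℝ) (hαmin : 0 < αmin)
    (α : EuclideanSpace ℝ (Fin n) → ℝ → ℝ) (hα : ∀ u t, αmin ≤ α u t)
    (x x' : ℝ → EuclideanSpace ℝ (Fin n))
    (hx : ∀ t ≥ t₀, HasDerivAt x (x' t) t)
    (hflow : ∀ t ≥ t₀, ∃ p : EuclideanSpace ℝ (Fin n),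
      p ∈ convexHull ℝ (Set.range fun i => (α (x t) t)⁻¹ • g i (x t)) ∧
      (∀ y ∈ convexHull ℝ (Set.range fun i => (α (x t) t)⁻¹ • g i (x t)), ‖p‖ ≤ ‖y‖) ∧
      x' t = -p) :
    (∀ i, AntitoneOn (fun t => f i (x t)) (Set.Ici t₀)) ∧
    (∀ s t, t₀ ≤ s → s ≤ t →
      {y | ∀ i, f i y ≤ f i (x t)} ⊆ {y | ∀ i, f i y ≤ f i (x s)}) := by
  have hdesc : ∀ i, ∀ t ≥ t₀, ⟪g i (x t), x' t⟫ ≤ 0 := fun i t ht => by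
    obtain ⟨p, hp, hmin, hvel⟩ := hflow t ht
    rw [hvel]
    exact inner_neg_nonpos_of_forall_norm_le_convexHull
      (inv_pos.mpr (hαmin.trans_le (hα _ _))) hp hmin i
  have hanti : ∀ i, AntitoneOn (fun t => f i (x t)) (Ici t₀) := fun i =>
    antitoneOn_comp_of_inner_gradient_nonpos (hg i) hx (hdesc i)
  exact ⟨hanti, fun s t hs hst y hy i => (hy i).trans (hanti i hs (hs.trans hst) hst)⟩

/-- along the balanced gradient flow each objective is non-increasing,
and the sublevel sets `L(f, f(x(t)))` are nested. -/
theorem sublevel_monotone_MBGF {n m : ℕ} [NeZero m]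
    (f : Fin m → EuclideanSpace ℝ (Fin n) → ℝ)
    (g : Fin m → EuclideanSpace ℝ (Fin n) → EuclideanSpace ℝ (Fin n))
    (hg : ∀ i u, HasGradientAt (f i) (g i u) u)
    (t₀ αmin : ℝ) (hαmin : 0 < αmin)
    (α : EuclideanSpace ℝ (Fin n) → ℝ → ℝ) (hα : ∀ u t, αmin ≤ α u t)
    (x x' : ℝ → EuclideanSpace ℝ (Fin n))
    (hx : ∀ t ≥ t₀, HasDerivAt x (x' t) t)
    (hflow : ∀ t ≥ t₀, ∃ p : EuclideanSpace ℝ (Fin n),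
      p ∈ convexHull ℝ (Set.range fun i => (α (x t) t)⁻¹ • g i (x t)) ∧
      (∀ y ∈ convexHull ℝ (Set.range fun i => (α (x t) t)⁻¹ • g i (x t)), ‖p‖ ≤ ‖y‖) ∧
      x' t = -p) :
    (∀ i, AntitoneOn (fun t => f i (x t)) (Set.Ici t₀)) ∧
    (∀ s t, t₀ ≤ s → s ≤ t →
      {y | ∀ i, f i y ≤ f i (x t)} ⊆ {y | ∀ i, f i y ≤ f i (x s)}) :=
  sublevel_monotone_MBGF_general f g hg t₀ αmin hαmin α hα x x' hx hflow
end

section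
/- The merit function u₀(x) := sup_{z∈ℝ^n} min_{i=1,…,m} (f_i(x) − f_i(z)) satisfies: (i) u₀(x) ≥ 0 for all x; (ii) x is a weak Pareto point of min f if and only if u₀(x) = 0; (iii) u₀ is lower semicontinuous. -/
noncomputable section
open Metric Set

/-- The merit function `u₀(x) = sup_z min_i (f_i(x) - f_i(z))`, valued in `EReal`. -/
def meritFun {n m : ℕ} [NeZero m]
    (f : Fin m → EuclideanSpace ℝ (Fin n) → ℝ) (x : EuclideanSpace ℝ (Fin n)) : EReal :=
  ⨆ z : EuclideanSpace ℝ (Fin n),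
    ((Finset.univ.inf' Finset.univ_nonempty fun i => f i x - f i z : ℝ) : EReal)

/-- properties of the merit function: nonnegativity, characterization
of weak Pareto points, and lower semicontinuity. -/
theorem meritFun_properties {n m : ℕ} [NeZero m]
    (f : Fin m → EuclideanSpace ℝ (Fin n) → ℝ)
    (hf : ∀ i, Continuous (f i)) :
    (∀ x, (0 : EReal) ≤ meritFun f x) ∧
    (∀ x, (¬ ∃ y, ∀ i, f i y < f i x) ↔ meritFun f x = 0) ∧
    LowerSemicontinuous (meritFun f) := by
  have hnonneg : ∀ x, (0 : EReal) ≤ meritFun f x := by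
    intro x
    have h : ((Finset.univ.inf' Finset.univ_nonempty fun i => f i x - f i x : ℝ) : EReal)
        ≤ meritFun f x := 
      le_iSup (fun z => ((Finset.univ.inf' Finset.univ_nonempty
        fun i => f i x - f i z : ℝ) : EReal)) x
    refine le_trans ?_ h
    have : (Finset.univ.inf' Finset.univ_nonempty fun i => f i x - f i x : ℝ) = 0 := by
      simp
    rw [this]; simp
  refine ⟨hnonneg, fun x => ⟨fun hx => ?_, fun hx ⟨y, hy⟩ => ?_⟩, ?_⟩
  · refine le_antisymm ?_ (hnonneg x)
    refine iSup_le fun z => ?_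
    push_neg at hx
    obtain ⟨i, hi⟩ := hx z
    have h1 : (Finset.univ.inf' Finset.univ_nonempty fun i => f i x - f i z : ℝ) ≤ 0 := by
      refine le_trans (Finset.inf'_le _ (Finset.mem_univ i)) (by linarith)
    exact_mod_cast EReal.coe_le_coe_iff.mpr h1
  · have h1 : (0:ℝ) < (Finset.univ.inf' Finset.univ_nonempty fun i => f i x - f i y : ℝ) := by
      rw [Finset.lt_inf'_iff]
      intro i _
      linarith [hy i]
    have h2 : ((Finset.univ.inf' Finset.univ_nonempty fun i => f i x - f i y : ℝ) : EReal)
        ≤ meritFun f x := 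
      le_iSup (fun z => ((Finset.univ.inf' Finset.univ_nonempty
        fun i => f i x - f i z : ℝ) : EReal)) y
    rw [hx] at h2
    have : (0:EReal) < ((Finset.univ.inf' Finset.univ_nonempty
        fun i => f i x - f i y : ℝ) : EReal) := by exact_mod_cast h1
    exact absurd h2 (not_le.mpr this)
  · apply lowerSemicontinuous_iSup
    intro z
    apply Continuous.lowerSemicontinuous
    apply continuous_coe_real_ereal.comp
    have h := Continuous.finset_inf'
      (f := fun i (x' : EuclideanSpace ℝ (Fin n)) => f i x' - f i z)
      Finset.univ_nonempty (fun i _ => (hf i).sub continuous_const)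
    convert h using 1
    funext x'
    simp [Finset.inf'_apply]
end
end

section
/- (Opial's Lemma) Let S ⊆ ℝ^n be nonempty and x : [0,∞) → ℝ^n. If every limit point of x(t) as t → ∞ belongs to S, and for every z ∈ S the limit lim_{t→∞} ‖x(t) − z‖ exists, then x(t) converges to some point x^∞ ∈ S as t → ∞. -/
noncomputable section
open Metric Set Filter
open scoped Topology

/-- Opial's lemma, continuous version. -/
theorem opial_lemma {n : ℕ}
    (S : Set (EuclideanSpace ℝ (Fin n))) (hS : S.Nonempty)
    (x : ℝ → EuclideanSpace ℝ (Fin n))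
    (hlim : ∀ p : EuclideanSpace ℝ (Fin n),
      (∃ tk : ℕ → ℝ, Tendsto tk atTop atTop ∧ Tendsto (fun k => x (tk k)) atTop (𝓝 p))
      → p ∈ S)
    (hdist : ∀ z ∈ S, ∃ l : ℝ, Tendsto (fun t => ‖x t - z‖) atTop (𝓝 l)) :
    ∃ xinf ∈ S, Tendsto x atTop (𝓝 xinf) := by
  obtain ⟨z, hz⟩ := hS
  obtain ⟨l0, hl0⟩ := hdist z hz
  -- eventual bound
  have hbdd : ∀ᶠ t in atTop, ‖x t - z‖ ≤ l0 + 1 := by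
    have := hl0.eventually (eventually_le_nhds (by linarith : l0 < l0 + 1))
    exact this
  obtain ⟨T, hT⟩ := eventually_atTop.1 hbdd
  -- the shifted sequence lies in a compact ball
  set K : Set (EuclideanSpace ℝ (Fin n)) := Metric.closedBall z (l0 + 1)
  have hK : IsCompact K := isCompact_closedBall _ _
  have hu : ∀ k : ℕ, x (T + k) ∈ K := by
    intro k
    have : ‖x (T + k) - z‖ ≤ l0 + 1 := hT (T + k) (by have := Nat.cast_nonneg (α := ℝ) k; linarith)
    simpa [K, Metric.mem_closedBall, dist_eq_norm] using this
  obtain ⟨p, _, φ, hφ, hconv⟩ := hK.tendsto_subseq hu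
  -- the sequence of times
  have htk : Tendsto (fun k : ℕ => T + (φ k : ℝ)) atTop atTop := by
    apply tendsto_atTop_add_const_left
    exact tendsto_natCast_atTop_atTop.comp hφ.tendsto_atTop
  have hpS : p ∈ S := hlim p ⟨fun k => T + (φ k : ℝ), htk, hconv⟩
  obtain ⟨l, hl⟩ := hdist p hpS
  -- the limit l equals 0
  have h1 : Tendsto (fun k : ℕ => ‖x (T + (φ k : ℝ)) - p‖) atTop (𝓝 l) :=
    hl.comp htk
  have h2 : Tendsto (fun k : ℕ => ‖x (T + (φ k : ℝ)) - p‖) atTop (𝓝 0) := by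
    have : Tendsto (fun k : ℕ => x (T + (φ k : ℝ)) - p) atTop (𝓝 (p - p)) :=
      hconv.sub tendsto_const_nhds
    simpa using this.norm
  have hl0' : l = 0 := tendsto_nhds_unique h1 h2
  refine ⟨p, hpS, ?_⟩
  rw [tendsto_iff_norm_sub_tendsto_zero]
  simpa [hl0'] using hl
end
end

section
/- Let f_i : ℝ^n → ℝ be bounded below with L-Lipschitz gradients, and let x(t) solve ẋ(t) = −proj_{C_η(x(t))}(0) where C_η(x) = conv{∇f_i(x)/(‖∇f_i(x)‖ + η)} with η > 0. Then for all t > 0, min_{s∈[0,t]} ‖proj_{C_η(x(s))}(0)‖ ≤ sqrt( min_i ( f_i(x₀) − inf_x f_i(x) ) ) / (√η √t). -/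
/-!
Let `p(s)` be the minimal-norm element of `C_η(x(s))`. Minimality of `p` in a convex set containing
the normalized gradients `∇f_i/(‖∇f_i‖ + η)` gives `η ‖p‖² ≤ ⟪∇f_i, p⟫`, so along the flow
`(f_i ∘ x)' = -⟪∇f_i, p⟫ ≤ -η ‖p‖²`. If `μ` is the minimum of `‖p‖` on `[0, t]`, integrating gives
`η μ² t ≤ f_i(x₀) - inf f_i` for every `i`, and solving for `μ` is the claim.
-/

open Set RealInnerProductSpace

theorem HasGradientAt.comp_hasDerivAt {F : Type*} [NormedAddCommGroup F]
    [InnerProductSpace ℝ F] [CompleteSpace F] {f : F → ℝ} {f' : F} {γ : ℝ → F} {γ' : F} {t : ℝ}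
    (hf : HasGradientAt f f' (γ t)) (hγ : HasDerivAt γ γ' t) :
    HasDerivAt (fun s => f (γ s)) ⟪f', γ'⟫ t := by
  have h := hf.hasFDerivAt.comp_hasDerivAt t hγ
  simp only [InnerProductSpace.toDual_apply_apply] at h
  exact h

theorem sub_le_mul_sub_of_hasDerivAt_le {φ φ' : ℝ → ℝ} {a b C : ℝ} (hab : a ≤ b)
    (hφ : ∀ s ∈ Icc a b, HasDerivAt φ (φ' s) s) (hle : ∀ s ∈ Icc a b, φ' s ≤ C) :
    φ b - φ a ≤ C * (b - a) :=
  (convex_Icc a b).image_sub_le_mul_sub_of_deriv_le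
    (fun s hs => (hφ s hs).continuousAt.continuousWithinAt)
    (fun s hs => (hφ s (interior_subset hs)).differentiableAt.differentiableWithinAt)
    (fun s hs => (hφ s (interior_subset hs)).deriv ▸ hle s (interior_subset hs))
    a (left_mem_Icc.2 hab) b (right_mem_Icc.2 hab) hab

section MinNorm

variable {E : Type*} [NormedAddCommGroup E] [InnerProductSpace ℝ E] {K : Set E} {v : E}

theorem norm_sq_le_inner_of_forall_norm_le (hK : Convex ℝ K) (hv : v ∈ K)
    (hmin : ∀ w ∈ K, ‖v‖ ≤ ‖w‖) {w : E} (hw : w ∈ K) : ‖v‖ ^ 2 ≤ ⟪v, w⟫ := by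
  have : Nonempty K := ⟨⟨v, hv⟩⟩
  -- `v` is the projection of `0` onto `K`.
  have hproj : ‖(0 : E) - v‖ = ⨅ w : K, ‖(0 : E) - w‖ :=
    le_antisymm (le_ciInf fun w => by simpa using hmin w w.2)
      (ciInf_le (f := fun w : K => ‖(0 : E) - w‖) ⟨0, by rintro _ ⟨w, rfl⟩; exact norm_nonneg _⟩ ⟨v, hv⟩)
  have h := (norm_eq_iInf_iff_real_inner_le_zero hK hv).1 hproj w hw
  rw [zero_sub, inner_sub_right, inner_neg_left, inner_neg_left, real_inner_self_eq_norm_sq] at h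
  linarith

theorem mul_norm_sq_le_inner_of_forall_norm_le (hK : Convex ℝ K) (hv : v ∈ K)
    (hmin : ∀ w ∈ K, ‖v‖ ≤ ‖w‖) {a : E} {η : ℝ} (hη : 0 < η) (ha : (‖a‖ + η)⁻¹ • a ∈ K) :
    η * ‖v‖ ^ 2 ≤ ⟪a, v⟫ := by
  have hc : 0 < ‖a‖ + η := by positivity
  have h := norm_sq_le_inner_of_forall_norm_le hK hv hmin ha
  rw [real_inner_smul_right, real_inner_comm, ← div_eq_inv_mul, le_div_iff₀ hc] at h
  calc η * ‖v‖ ^ 2 ≤ ‖v‖ ^ 2 * (‖a‖ + η) := by nlinarith [norm_nonneg a, sq_nonneg ‖v‖]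
    _ ≤ ⟪a, v⟫ := h

end MinNorm

theorem le_sqrt_div_sqrt_mul_sqrt_of_mul_sq_mul_le {μ η t M : ℝ} (hη : 0 < η)
    (ht : 0 < t) (h : η * μ ^ 2 * t ≤ M) : μ ≤ √M / (√η * √t) := by
  rw [← Real.sqrt_mul hη.le, ← Real.sqrt_div' _ (mul_pos hη ht).le]
  refine Real.le_sqrt_of_sq_le ((le_div_iff₀ (mul_pos hη ht)).2 ?_)
  linarith

theorem nonconvex_rate_MBGF_general {n m : ℕ} [NeZero m]
    (f : Fin m → EuclideanSpace ℝ (Fin n) → ℝ)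
    (g : Fin m → EuclideanSpace ℝ (Fin n) → EuclideanSpace ℝ (Fin n))
    (hg : ∀ i u, HasGradientAt (f i) (g i u) u)
    (hbelow : ∀ i, BddBelow (Set.range (f i)))
    (η : ℝ) (hη : 0 < η)
    (x x' : ℝ → EuclideanSpace ℝ (Fin n))
    (p : ℝ → EuclideanSpace ℝ (Fin n))
    (hx : ∀ t ≥ (0:ℝ), HasDerivAt x (x' t) t)
    (hflow : ∀ t ≥ (0:ℝ),
      p t ∈ convexHull ℝ (Set.range fun i => (‖g i (x t)‖ + η)⁻¹ • g i (x t)) ∧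
      (∀ y ∈ convexHull ℝ (Set.range fun i => (‖g i (x t)‖ + η)⁻¹ • g i (x t)),
        ‖p t‖ ≤ ‖y‖) ∧
      x' t = -(p t)) :
    ∀ t > (0:ℝ),
      sInf ((fun s => ‖p s‖) '' Set.Icc 0 t) ≤
        Real.sqrt (Finset.univ.inf' Finset.univ_nonempty
            fun i => f i (x 0) - ⨅ y : EuclideanSpace ℝ (Fin n), f i y) /
          (Real.sqrt η * Real.sqrt t) := by
  intro t ht
  set μ := sInf ((fun s => ‖p s‖) '' Icc 0 t)
  have hμ : 0 ≤ μ := Real.sInf_nonneg <| by rintro _ ⟨s, -, rfl⟩; exact norm_nonneg _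
  have hμle (s) (hs : s ∈ Icc 0 t) : μ ≤ ‖p s‖ :=
    csInf_le ⟨0, by rintro _ ⟨s, -, rfl⟩; exact norm_nonneg _⟩ ⟨s, hs, rfl⟩
  have hdecrease (i) : η * μ ^ 2 * t ≤ f i (x 0) - ⨅ y, f i y := by
    have hslope (s) (hs : s ∈ Icc 0 t) : ⟪g i (x s), x' s⟫ ≤ -(η * μ ^ 2) := by
      obtain ⟨hp, hpmin, hx's⟩ := hflow s hs.1
      have := mul_norm_sq_le_inner_of_forall_norm_le (convex_convexHull ℝ _) hp hpmin hη
        (subset_convexHull ℝ _ ⟨i, rfl⟩)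
      rw [hx's, inner_neg_right]
      nlinarith [pow_le_pow_left₀ hμ (hμle s hs) 2]
    have := sub_le_mul_sub_of_hasDerivAt_le ht.le
      (fun s hs => (hg i (x s)).comp_hasDerivAt (hx s hs.1)) hslope
    linarith [ciInf_le (hbelow i) (x t)]
  exact le_sqrt_div_sqrt_mul_sqrt_of_mul_sq_mul_le hη ht
    (Finset.le_inf' _ _ fun i _ => hdecrease i)

/-- `O(1/√t)` rate on the minimal projection norm in the
non-convex case, for the normalized flow with `η > 0`. -/
theorem nonconvex_rate_MBGF {n m : ℕ} [NeZero m]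
    (f : Fin m → EuclideanSpace ℝ (Fin n) → ℝ)
    (g : Fin m → EuclideanSpace ℝ (Fin n) → EuclideanSpace ℝ (Fin n))
    (hg : ∀ i u, HasGradientAt (f i) (g i u) u)
    (hbelow : ∀ i, BddBelow (Set.range (f i)))
    (L : ℝ) (hL : ∀ i u v, ‖g i u - g i v‖ ≤ L * ‖u - v‖)
    (η : ℝ) (hη : 0 < η)
    (x x' : ℝ → EuclideanSpace ℝ (Fin n))
    (p : ℝ → EuclideanSpace ℝ (Fin n))
    (hx : ∀ t ≥ (0:ℝ), HasDerivAt x (x' t) t)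
    (hflow : ∀ t ≥ (0:ℝ),
      p t ∈ convexHull ℝ (Set.range fun i => (‖g i (x t)‖ + η)⁻¹ • g i (x t)) ∧
      (∀ y ∈ convexHull ℝ (Set.range fun i => (‖g i (x t)‖ + η)⁻¹ • g i (x t)),
        ‖p t‖ ≤ ‖y‖) ∧
      x' t = -(p t)) :
    ∀ t > (0:ℝ),
      sInf ((fun s => ‖p s‖) '' Set.Icc 0 t) ≤
        Real.sqrt (Finset.univ.inf' Finset.univ_nonempty
            fun i => f i (x 0) - ⨅ y : EuclideanSpace ℝ (Fin n), f i y) /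
          (Real.sqrt η * Real.sqrt t) :=
  nonconvex_rate_MBGF_general f g hg hbelow η hη x x' p hx hflow
end

section
/- Let each f_i have L_i-Lipschitz gradient and let x_{k+1} = x_k − s_k proj_{C_α(x_k)}(0) with C_α(x_k) = conv{∇f_i(x_k)/α_i(x_k,k)}, α_i(x_k,k) ≥ α_min > 0, and step sizes 0 < s_min ≤ s_k ≤ min_i 2α_i(x_k,k)/L_i. Then f_i(x_{k+1}) ≤ f_i(x_k) for all i and k; more precisely f_i(x_{k+1}) − f_i(x_k) ≤ (α_i(x_k,k)/(2s_k))(L_i s_k/α_i(x_k,k) − 2)‖x_{k+1}−x_k‖² ≤ 0. -/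
/-!
Each step moves along `-p`, where `p` is the minimum-norm point of the convex hull of the scaled
gradients `∇fᵢ(x)/αᵢ`. The variational inequality of this projection gives
`‖p‖² ≤ ⟪p, ∇fᵢ(x)/αᵢ⟫` for every `i`, so `-p` decreases every `fᵢ` to first order at rate at
least `αᵢ‖p‖²`. The quadratic upper bound coming from the `Lᵢ`-Lipschitz gradient then bounds the
change of `fᵢ` by `(Lᵢ/2 - αᵢ/s)‖x_{k+1} - x_k‖²`, which is nonpositive since `s ≤ 2αᵢ/Lᵢ`.
-/

open Set
open scoped RealInnerProductSpace

section Descent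

variable {E : Type*} [NormedAddCommGroup E] [InnerProductSpace ℝ E]

theorem norm_sq_le_inner_of_isMinOn_norm {C : Set E} (hC : Convex ℝ C) {p : E} (hpC : p ∈ C)
    (hmin : IsMinOn norm C p) {y : E} (hy : y ∈ C) : ‖p‖ ^ 2 ≤ ⟪p, y⟫ := by
  have : Nonempty C := ⟨⟨p, hpC⟩⟩
  have hinf : ‖0 - p‖ = ⨅ w : C, ‖0 - (w : E)‖ := by
    simp only [zero_sub, norm_neg]
    exact le_antisymm (le_ciInf fun w => hmin w.2)
      (ciInf_le (bddBelow_def.2 ⟨0, forall_mem_range.2 fun _ => norm_nonneg _⟩) (⟨p, hpC⟩ : C))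
  have hvar := (norm_eq_iInf_iff_real_inner_le_zero hC hpC).mp hinf y hy
  rw [zero_sub, inner_neg_left, inner_sub_right, real_inner_self_eq_norm_sq] at hvar
  linarith

variable [CompleteSpace E]

theorem HasGradientAt.hasDerivAt_comp_add_smul {f : E → ℝ} {g x d : E} {t : ℝ}
    (hf : HasGradientAt f g (x + t • d)) :
    HasDerivAt (fun t : ℝ => f (x + t • d)) ⟪g, d⟫ t := by
  have hline : HasDerivAt (fun t : ℝ => x + t • d) d t := by
    simpa using ((hasDerivAt_id t).smul_const d).const_add x
  have := hf.hasFDerivAt.comp_hasDerivAt t hline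
  rwa [InnerProductSpace.toDual_apply_apply] at this

theorem le_add_inner_add_of_lipschitz_gradient {f : E → ℝ} {g : E → E}
    (hg : ∀ u, HasGradientAt f (g u) u) {L : ℝ} (hL : ∀ u v, ‖g u - g v‖ ≤ L * ‖u - v‖)
    (x y : E) : f y ≤ f x + ⟪g x, y - x⟫ + L / 2 * ‖y - x‖ ^ 2 := by
  set d := y - x with hd
  let h : ℝ → ℝ := fun t => f (x + t • d) - t * ⟪g x, d⟫ - L / 2 * t ^ 2 * ‖d‖ ^ 2
  let h' : ℝ → ℝ := fun t => ⟪g (x + t • d) - g x, d⟫ - L * t * ‖d‖ ^ 2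
  have hderiv : ∀ t, HasDerivAt h (h' t) t := by
    intro t
    refine (((hg (x + t • d)).hasDerivAt_comp_add_smul.sub
      ((hasDerivAt_id t).mul_const ⟪g x, d⟫)).sub
      (((hasDerivAt_pow 2 t).const_mul (L / 2)).mul_const (‖d‖ ^ 2))).congr_deriv ?_
    simp only [h', inner_sub_left]
    ring
  have hderiv_nonpos : ∀ t ∈ interior (Icc (0 : ℝ) 1), h' t ≤ 0 := by
    intro t ht
    rw [interior_Icc] at ht
    have hlip : ‖g (x + t • d) - g x‖ ≤ L * t * ‖d‖ := by
      simpa [norm_smul, abs_of_pos ht.1, mul_assoc] using hL (x + t • d) x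
    have := (real_inner_le_norm _ d).trans (mul_le_mul_of_nonneg_right hlip (norm_nonneg d))
    simp only [h']
    nlinarith
  have hanti : AntitoneOn h (Icc 0 1) :=
    antitoneOn_of_hasDerivWithinAt_nonpos (convex_Icc 0 1)
      (continuous_iff_continuousAt.mpr fun t => (hderiv t).continuousAt).continuousOn
      (fun t _ => (hderiv t).hasDerivWithinAt) hderiv_nonpos
  have h10 : h 1 ≤ h 0 := hanti (by norm_num) (by norm_num) zero_le_one
  simp only [h, one_smul, zero_smul, add_zero, one_pow, zero_pow two_ne_zero, hd,
    add_sub_cancel] at h10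
  linarith

theorem apply_sub_smul_sub_le_of_mul_norm_sq_le_inner {f : E → ℝ} {g : E → E}
    (hg : ∀ u, HasGradientAt f (g u) u) {L : ℝ} (hL : ∀ u v, ‖g u - g v‖ ≤ L * ‖u - v‖)
    {x p : E} {a s : ℝ} (hs : 0 < s) (hp : a * ‖p‖ ^ 2 ≤ ⟪g x, p⟫) :
    f (x - s • p) - f x ≤ (L / 2 - a / s) * ‖x - s • p - x‖ ^ 2 := by
  have hquad := le_add_inner_add_of_lipschitz_gradient hg hL x (x - s • p)
  rw [sub_sub_cancel_left, inner_neg_right, real_inner_smul_right, norm_neg, norm_smul,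
    Real.norm_of_nonneg hs.le] at hquad
  rw [sub_sub_cancel_left, norm_neg, norm_smul, Real.norm_of_nonneg hs.le]
  have hcoef : a / s * (s * ‖p‖) ^ 2 = s * (a * ‖p‖ ^ 2) := by field_simp
  have := mul_le_mul_of_nonneg_left hp hs.le
  rw [sub_mul, hcoef]
  linarith

end Descent

theorem discrete_descent_general {n m : ℕ} [NeZero m]
    (f : Fin m → EuclideanSpace ℝ (Fin n) → ℝ)
    (g : Fin m → EuclideanSpace ℝ (Fin n) → EuclideanSpace ℝ (Fin n))
    (hg : ∀ i u, HasGradientAt (f i) (g i u) u)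
    (L : Fin m → ℝ) (hLpos : ∀ i, 0 < L i)
    (hL : ∀ i u v, ‖g i u - g i v‖ ≤ L i * ‖u - v‖)
    (α : ℕ → Fin m → ℝ)
    (smin : ℝ) (s : ℕ → ℝ)
    (hs : ∀ k, 0 < smin ∧ smin ≤ s k ∧
      s k ≤ Finset.univ.inf' Finset.univ_nonempty (fun i => 2 * α k i / L i))
    (x : ℕ → EuclideanSpace ℝ (Fin n))
    (p : ℕ → EuclideanSpace ℝ (Fin n))
    (hp : ∀ k,
      p k ∈ convexHull ℝ (Set.range fun i => (α k i)⁻¹ • g i (x k)) ∧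
      ∀ y ∈ convexHull ℝ (Set.range fun i => (α k i)⁻¹ • g i (x k)), ‖p k‖ ≤ ‖y‖)
    (hiter : ∀ k, x (k + 1) = x k - s k • p k) :
    ∀ k i,
      f i (x (k + 1)) - f i (x k) ≤
        α k i / (2 * s k) * (L i * s k / α k i - 2) * ‖x (k + 1) - x k‖ ^ 2 ∧
      α k i / (2 * s k) * (L i * s k / α k i - 2) * ‖x (k + 1) - x k‖ ^ 2 ≤ 0 := by
  intro k i
  obtain ⟨hsmin, hsk, hsinf⟩ := hs k
  have hspos : 0 < s k := hsmin.trans_le hsk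
  have hsle : s k ≤ 2 * α k i / L i := hsinf.trans (Finset.inf'_le _ (Finset.mem_univ i))
  have hαpos : 0 < α k i := by
    have := (div_pos_iff_of_pos_right (hLpos i)).mp (hspos.trans_le hsle)
    linarith
  have hvar : ‖p k‖ ^ 2 ≤ ⟪p k, (α k i)⁻¹ • g i (x k)⟫ :=
    norm_sq_le_inner_of_isMinOn_norm (convex_convexHull ℝ _) (hp k).1 (hp k).2
      (subset_convexHull ℝ _ ⟨i, rfl⟩)
  have hrate : α k i * ‖p k‖ ^ 2 ≤ ⟪g i (x k), p k⟫ := by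
    rwa [real_inner_smul_right, real_inner_comm, le_inv_mul_iff₀ hαpos] at hvar
  have hcoef : α k i / (2 * s k) * (L i * s k / α k i - 2) = L i / 2 - α k i / s k := by
    field_simp
  have hcoef_nonpos : L i / 2 - α k i / s k ≤ 0 := by
    rw [sub_nonpos, div_le_div_iff₀ two_pos hspos]
    linarith [(le_div_iff₀ (hLpos i)).mp hsle]
  rw [hcoef, hiter k]
  exact ⟨apply_sub_smul_sub_le_of_mul_norm_sq_le_inner (hg i) (hL i) hspos hrate,
    mul_nonpos_of_nonpos_of_nonneg hcoef_nonpos (sq_nonneg _)⟩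

/-- per-step descent of the discrete balanced gradient scheme. -/
theorem discrete_descent {n m : ℕ} [NeZero m]
    (f : Fin m → EuclideanSpace ℝ (Fin n) → ℝ)
    (g : Fin m → EuclideanSpace ℝ (Fin n) → EuclideanSpace ℝ (Fin n))
    (hg : ∀ i u, HasGradientAt (f i) (g i u) u)
    (L : Fin m → ℝ) (hLpos : ∀ i, 0 < L i)
    (hL : ∀ i u v, ‖g i u - g i v‖ ≤ L i * ‖u - v‖)
    (αmin : ℝ) (hαmin : 0 < αmin)
    (α : ℕ → Fin m → ℝ) (hα : ∀ k i, αmin ≤ α k i)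
    (smin : ℝ) (s : ℕ → ℝ)
    (hs : ∀ k, 0 < smin ∧ smin ≤ s k ∧
      s k ≤ Finset.univ.inf' Finset.univ_nonempty (fun i => 2 * α k i / L i))
    (x : ℕ → EuclideanSpace ℝ (Fin n))
    (p : ℕ → EuclideanSpace ℝ (Fin n))
    (hp : ∀ k,
      p k ∈ convexHull ℝ (Set.range fun i => (α k i)⁻¹ • g i (x k)) ∧
      ∀ y ∈ convexHull ℝ (Set.range fun i => (α k i)⁻¹ • g i (x k)), ‖p k‖ ≤ ‖y‖)
    (hiter : ∀ k, x (k + 1) = x k - s k • p k) :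
    ∀ k i,
      f i (x (k + 1)) - f i (x k) ≤
        α k i / (2 * s k) * (L i * s k / α k i - 2) * ‖x (k + 1) - x k‖ ^ 2 ∧
      α k i / (2 * s k) * (L i * s k / α k i - 2) * ‖x (k + 1) - x k‖ ^ 2 ≤ 0 :=
  discrete_descent_general f g hg L hLpos hL α smin s hs x p hp hiter
end
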